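/- For all positive rationals a and c and every rational L, there exists a rational x with a < x < a + c and D(x) ≥ L. -/

import Mathlib

/-- The arithmetic derivative on `ℕ`: `D p = 1` for primes, `D (a*b) = D a * b + a * D b`;
explicitly `D n = n * Σ αᵢ / pᵢ` for `n = ∏ pᵢ ^ αᵢ`, and `D 0 = D 1 = 0`. -/
def arithDeriv (n : ℕ) : ℕ := ∑ p ∈ n.primeFactors, n.factorization p * (n / p)

/-- The logarithmic arithmetic derivative `ld n = D n / n = Σ αᵢ / pᵢ` of a natural number. -/
def natLogDeriv (n : ℕ) : ℚ := ∑ p ∈ n.primeFactors, (n.factorization p : ℚ) / p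

/-- The arithmetic derivative on `ℚ`: the unique function with `D p = 1` for primes
satisfying the Leibniz rule `D (x*y) = D x * y + x * D y`; explicitly
`D (± a/b) = ± (D a * b - a * D b) / b²` for coprime naturals `a`, `b`. -/
def ratArithDeriv (q : ℚ) : ℚ := q * (natLogDeriv q.num.natAbs - natLogDeriv q.den)

/-! Write `x = m / n` in lowest terms; then `D x = x (ld m - ld n)`. Take `x = 2^k s / q` with `q`
an odd prime: `ld (2^k s) ≥ k / 2` and `ld q = 1 / q < 1`, so `D x ≥ x (k / 2 - 1)`, which is large
once `k` is. For fixed `k` and a large prime `q` the multiples of `2^k / q` are `c`-dense, and the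
first one beyond `a` has `s < q` as soon as `2 a ≤ 2^k`, so `2^k s / q` is in lowest terms. -/

open Filter

lemma natLogDeriv_nonneg (n : ℕ) : 0 ≤ natLogDeriv n :=
  Finset.sum_nonneg fun p _ => by positivity

lemma natLogDeriv_prime {p : ℕ} (hp : p.Prime) : natLogDeriv p = 1 / p := by
  simp [natLogDeriv, hp.primeFactors, hp.factorization]

lemma div_le_natLogDeriv_of_pow_dvd {p k n : ℕ} (hp : p.Prime) (hn : n ≠ 0) (hdvd : p ^ k ∣ n) :
    (k : ℚ) / p ≤ natLogDeriv n := by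
  rcases k.eq_zero_or_pos with rfl | hk
  · simpa using natLogDeriv_nonneg n
  have hk_le : k ≤ n.factorization p := (hp.pow_dvd_iff_le_factorization hn).1 hdvd
  have hp_mem : p ∈ n.primeFactors :=
    Nat.mem_primeFactors.2 ⟨hp, (dvd_pow_self p hk.ne').trans hdvd, hn⟩
  calc (k : ℚ) / p ≤ (n.factorization p : ℚ) / p := by gcongr
    _ ≤ natLogDeriv n :=
      Finset.single_le_sum (f := fun q => (n.factorization q : ℚ) / q) (fun q _ => by positivity)
        hp_mem

lemma ratArithDeriv_natCast_div {m n : ℕ} (hn : 0 < n) (hmn : m.Coprime n) :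
    ratArithDeriv (m / n) = m / n * (natLogDeriv m - natLogDeriv n) := by
  have hn' : (0 : ℤ) < n := by exact_mod_cast hn
  have hmn' : (m : ℤ).natAbs.Coprime (n : ℤ).natAbs := by simpa using hmn
  have hnum := Rat.num_div_eq_of_coprime hn' hmn'
  have hden := Rat.den_div_eq_of_coprime hn' hmn'
  simp only [Int.cast_natCast] at hnum hden
  rw [ratArithDeriv, hnum, Int.natAbs_natCast, Int.natCast_inj.1 hden]

lemma exists_nat_mul_mem_Ioc {a d : ℚ} (ha : 0 ≤ a) (hd : 0 < d) :
    ∃ s : ℕ, 0 < s ∧ a < s * d ∧ s * d ≤ a + d := by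
  refine ⟨⌊a / d⌋₊ + 1, Nat.succ_pos _, ?_, ?_⟩
  · rw [← div_lt_iff₀ hd]; push_cast; exact Nat.lt_floor_add_one _
  · rw [Nat.cast_add_one, add_one_mul, add_le_add_iff_right, ← le_div_iff₀ hd]
    exact Nat.floor_le (div_nonneg ha hd.le)

lemma ratArithDeriv_two_pow_mul_div_prime_ge {k s q : ℕ} (hs : s ≠ 0) (hq : q.Prime)
    (hcop : (2 ^ k * s).Coprime q) :
    ((2 ^ k * s : ℕ) / q : ℚ) * (k / 2 - 1) ≤ ratArithDeriv ((2 ^ k * s : ℕ) / q) := by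
  rw [ratArithDeriv_natCast_div hq.pos hcop, natLogDeriv_prime hq]
  have hlog : (k : ℚ) / 2 ≤ natLogDeriv (2 ^ k * s) :=
    mod_cast div_le_natLogDeriv_of_pow_dvd Nat.prime_two (by positivity) (dvd_mul_right _ _)
  have hq_inv : (1 : ℚ) / q ≤ 1 := div_le_one_of_le₀ (mod_cast hq.one_le) (by positivity)
  gcongr

/-- For all positive rationals `a`, `c` and every rational `L` there is a rational
`x ∈ (a, a+c)` with `D x ≥ L`. -/
theorem stmt_14 (a c : ℚ) (ha : 0 < a) (hc : 0 < c) (L : ℚ) :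
    ∃ x : ℚ, a < x ∧ x < a + c ∧ L ≤ ratArithDeriv x := by
  obtain ⟨k, hka, hk2, hkL⟩ : ∃ k : ℕ, 2 * a ≤ 2 ^ k ∧ 2 ≤ k ∧ 2 * (L / a + 1) ≤ k :=
    ((tendsto_pow_atTop_atTop_of_one_lt one_lt_two).eventually_ge_atTop _ |>.and <|
      (eventually_ge_atTop 2).and <|
        tendsto_natCast_atTop_atTop.eventually_ge_atTop _).exists
  obtain ⟨q, hq, hq2, hqc⟩ : ∃ q : ℕ, q.Prime ∧ 2 < q ∧ (2 : ℚ) ^ k / q < c :=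
    (Nat.frequently_atTop_iff_infinite.2 Nat.infinite_setOfPred_prime).and_eventually
      ((eventually_gt_atTop 2).and <|
        (tendsto_const_div_atTop_nhds_zero_nat _).eventually (gt_mem_nhds hc)) |>.exists
  obtain ⟨s, hs0, has, hsa⟩ := exists_nat_mul_mem_Ioc ha.le (d := 2 ^ k / q) (by positivity)
  have hx : ((2 ^ k * s : ℕ) / q : ℚ) = s * (2 ^ k / q) := by push_cast; ring
  have hsq : s < q := by
    have hd : (2 : ℚ) ^ k / q < 2 ^ k / 2 := by gcongr; exact_mod_cast hq2
    have hs : (s : ℚ) * 2 ^ k < q * 2 ^ k := by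
      rw [← div_lt_iff₀' (by exact_mod_cast hq.pos), mul_div_assoc]
      linarith
    exact_mod_cast lt_of_mul_lt_mul_right hs (by positivity)
  have hcop : (2 ^ k * s).Coprime q :=
    Nat.Coprime.mul_left (((Nat.coprime_primes Nat.prime_two hq).2 hq2.ne).pow_left k)
      (Nat.coprime_of_lt_prime hs0.ne' hsq hq).symm
  refine ⟨(2 ^ k * s : ℕ) / q, hx ▸ has, hx ▸ hsa.trans_lt (by linarith), ?_⟩
  calc L ≤ a * (k / 2 - 1) := by
        rw [← div_le_iff₀' ha]; linarith
    _ ≤ ((2 ^ k * s : ℕ) / q : ℚ) * (k / 2 - 1) := by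
        have : (2 : ℚ) ≤ k := mod_cast hk2
        rw [hx]; gcongr
        linarith
    _ ≤ _ := ratArithDeriv_two_pow_mul_div_prime_ge hs0.ne' hq hcop
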